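/- For fixed integer $m \geq 0$ and real $\alpha > -1$, as $n \to \infty$ (with $n = m+j$), $n^{-\alpha-1}\, \hat{L}^{II,\alpha}_{m,n}(z/n)$ converges uniformly on compact subsets of $\mathbb{C}$ to $-\binom{m-1-\alpha}{m}\, z^{-\alpha/2} J_{\alpha}(2\sqrt{z})$. -/

import Mathlib

/-!
With `n = m + j` and `x = z / n`, the quantity `n^{-α-1} L̂^{II,α}_{m,n}(z/n)` equals
`z L^{-α-1}_m(z/n) · n^{-α-2} L^{α+2}_{j-1}(z/n) + (m-α-1) L^{-α-2}_m(z/n) · n^{-α-1} L^{α+1}_j(z/n)`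
(for `j ≥ 1`).
The Laguerre factors of fixed degree `m` tend to their values at `0`, and the two rescaled
factors tend to `J̃_β(z) = z^{-β/2} J_β(2√z)` for `β = α + 2, α + 1` (Heine–Mehler). The latter is
proved coefficientwise: the `k`-th Taylor coefficient of `n^{-β} L^β_N(z/n)` tends to
`(-1)^k / (k! Γ(β+k+1))` by Gauss's product formula for `Γ`, and consecutive coefficients have
ratio at most `1/(k+1)`, so they are dominated by `C/k!` and Tannery's theorem gives uniform
convergence on discs. Finally the recurrence `z J̃_{α+2} = (α+1) J̃_{α+1} - J̃_α`, together with
`x binom(x-1, m) = (x-m) binom(x, m)`, collapses the limit to `-binom(m-1-α, m) J̃_α`.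
-/

noncomputable def gbinomC (x : ℂ) (k : ℕ) : ℂ :=
  (∏ i ∈ Finset.range k, (x - i)) / (Nat.factorial k)

/-- Classical (associated) Laguerre polynomial over `ℂ`, with value `0` for `n < 0`. -/
noncomputable def lagC (α : ℂ) (n : ℤ) (x : ℂ) : ℂ :=
  if n < 0 then 0 else
    ∑ k ∈ Finset.range (n.toNat + 1),
      (-1 : ℂ) ^ k * gbinomC ((n : ℂ) + α) (n.toNat - k) * x ^ k / (Nat.factorial k)

/-- The entire function `z ↦ z^{-α/2} J_α(2√z)`, where `J_α` is the Bessel function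
of the first kind of order `α`. -/
noncomputable def besselEntire (α : ℂ) (z : ℂ) : ℂ :=
  ∑' k : ℕ, (-1 : ℂ) ^ k * z ^ k / ((Nat.factorial k : ℂ) * Complex.Gamma (α + k + 1))

/-- Type II exceptional `X_m`-Laguerre polynomial over `ℂ`. -/
noncomputable def XLagIIC (α : ℂ) (m j : ℤ) (x : ℂ) : ℂ :=
  x * lagC (-α - 1) m x * lagC (α + 2) (j - 1) x
    + ((m : ℂ) - α - 1) * lagC (-α - 2) m x * lagC (α + 1) j x

open Filter Topology Metric Finset Nat

theorem tendstoUniformlyOn_iff_tendsto_sub {ι α E : Type*} [SeminormedAddCommGroup E]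
    {F : ι → α → E} {f : α → E} {l : Filter ι} {s : Set α} :
    TendstoUniformlyOn F f l s ↔
      Tendsto (fun q : ι × α => F q.1 q.2 - f q.2) (l ×ˢ 𝓟 s) (𝓝 0) := by
  rw [tendstoUniformlyOn_iff_tendsto, _root_.uniformity_eq_comap_nhds_zero E, tendsto_comap_iff]
  rfl

theorem TendstoUniformlyOn.mul_of_bound {ι α R : Type*} [SeminormedRing R]
    {F G : ι → α → R} {f g : α → R} {l : Filter ι} {s : Set α}
    (hF : TendstoUniformlyOn F f l s) (hG : TendstoUniformlyOn G g l s) {Cf Cg : ℝ}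
    (hf : ∀ x ∈ s, ‖f x‖ ≤ Cf) (hg : ∀ x ∈ s, ‖g x‖ ≤ Cg) :
    TendstoUniformlyOn (fun i x => F i x * G i x) (fun x => f x * g x) l s := by
  rw [tendstoUniformlyOn_iff_tendsto_sub] at hF hG ⊢
  have hs : ∀ᶠ q : ι × α in l ×ˢ 𝓟 s, q.2 ∈ s := tendsto_snd (mem_principal_self s)
  have hG_bdd : IsBoundedUnder (· ≤ ·) (l ×ˢ 𝓟 s) (fun q => ‖G q.1 q.2‖) := by
    refine ⟨1 + Cg, eventually_map.2 ?_⟩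
    filter_upwards [hs, hG.norm.eventually (gt_mem_nhds (show ‖(0 : R)‖ < 1 by simp))]
      with q hq hq'
    calc ‖G q.1 q.2‖ ≤ ‖G q.1 q.2 - g q.2‖ + ‖g q.2‖ := norm_le_norm_sub_add _ _
      _ ≤ 1 + Cg := add_le_add hq'.le (hg _ hq)
  have hf_bdd : IsBoundedUnder (· ≤ ·) (l ×ˢ 𝓟 s) (fun q => ‖f q.2‖) :=
    ⟨Cf, hs.mono fun q hq => hf _ hq⟩
  have hsum := (hF.zero_mul_isBoundedUnder_le hG_bdd).add
    (isBoundedUnder_le_mul_tendsto_zero hf_bdd hG)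
  rw [add_zero] at hsum
  refine hsum.congr fun q => ?_
  simp only [sub_mul, mul_sub]
  abel

theorem tendstoUniformlyOn_tsum_mul_pow_of_dominated {ι 𝕜 : Type*} [NormedField 𝕜]
    [CompleteSpace 𝕜] {l : Filter ι} [l.NeBot] {c : ι → ℕ → 𝕜} {a : ℕ → 𝕜} {D : ℕ → ℝ}
    {R : ℝ} (hR : 0 ≤ R) (hD : Summable fun k => D k * R ^ k)
    (hc : ∀ k, Tendsto (c · k) l (𝓝 (a k))) (hcD : ∀ᶠ i in l, ∀ k, ‖c i k‖ ≤ D k) :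
    TendstoUniformlyOn (fun i z => ∑' k, c i k * z ^ k) (fun z => ∑' k, a k * z ^ k) l
      (closedBall 0 R) := by
  have haD : ∀ k, ‖a k‖ ≤ D k := fun k => le_of_tendsto (hc k).norm (hcD.mono fun i h => h k)
  have hsub : ∀ i, (∀ k, ‖c i k‖ ≤ D k) → ∀ k, ‖‖c i k - a k‖ * R ^ k‖ ≤ 2 * D k * R ^ k :=
    fun i hi k => by
      rw [norm_mul, norm_norm, norm_pow, Real.norm_of_nonneg hR]
      have := (norm_sub_le (c i k) (a k)).trans (add_le_add (hi k) (haD k))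
      exact mul_le_mul_of_nonneg_right (by linarith) (by positivity)
  have hD2 : Summable fun k => 2 * D k * R ^ k := by simpa only [mul_assoc] using hD.mul_left 2
  have htail : Tendsto (fun i => ∑' k, ‖c i k - a k‖ * R ^ k) l (𝓝 0) := by
    have := tendsto_tsum_of_dominated_convergence hD2
      (fun k => by simpa using (((hc k).sub_const (a k)).norm.mul_const (R ^ k)))
      (hcD.mono hsub)
    rwa [tsum_zero] at this
  have hsummable : ∀ b : ℕ → 𝕜, (∀ k, ‖b k‖ ≤ D k) → ∀ z ∈ closedBall (0 : 𝕜) R,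
      Summable fun k => b k * z ^ k := fun b hb z hz =>
    hD.of_norm_bounded fun k => by
      rw [norm_mul, norm_pow]
      exact mul_le_mul (hb k) (pow_le_pow_left₀ (norm_nonneg z) (mem_closedBall_zero_iff.1 hz) k)
        (by positivity) ((norm_nonneg _).trans (haD k))
  rw [Metric.tendstoUniformlyOn_iff]
  intro ε hε
  filter_upwards [hcD, htail.eventually (gt_mem_nhds hε)] with i hi hiε z hz
  rw [dist_eq_norm, ← (hsummable a haD z hz).tsum_sub (hsummable (c i) hi z hz)]
  refine lt_of_le_of_lt (tsum_of_norm_bounded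
    ((hD2.of_norm_bounded (hsub i hi)).hasSum) fun k => ?_) hiε
  rw [← sub_mul, norm_mul, norm_sub_rev, norm_pow]
  gcongr
  exact mem_closedBall_zero_iff.1 hz

theorem tendstoUniformlyOn_comp_div_natCast {X ι : Type*} [UniformSpace X] {f : ℂ → X}
    (hf : ContinuousAt f 0) {l : Filter ι} {n : ι → ℕ} (hn : Tendsto n l atTop) (R : ℝ) :
    TendstoUniformlyOn (fun j z => f (z / n j)) (fun _ => f 0) l (closedBall 0 R) := by
  rw [← tendsto_prod_principal_iff]
  refine hf.tendsto.comp ?_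
  have hinv : Tendsto (fun q : ι × ℂ => ((n q.1 : ℂ))⁻¹) (l ×ˢ 𝓟 (closedBall 0 R)) (𝓝 0) :=
    (tendsto_inv_atTop_nhds_zero_nat (𝕜 := ℂ)).comp (hn.comp tendsto_fst)
  have hbdd : IsBoundedUnder (· ≤ ·) (l ×ˢ 𝓟 (closedBall 0 R)) fun q : ι × ℂ => ‖q.2‖ :=
    ⟨R, eventually_map.2 <| (tendsto_snd.eventually (eventually_principal.2 fun _ hz => hz)).mono
      fun q hq => mem_closedBall_zero_iff.1 hq⟩
  simpa [div_eq_mul_inv] using isBoundedUnder_le_mul_tendsto_zero hbdd hinv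

theorem gbinomC_succ_mul (x : ℂ) (d : ℕ) :
    gbinomC x (d + 1) * (d + 1) = gbinomC x d * (x - d) := by
  simp only [gbinomC, prod_range_succ, factorial_succ, cast_mul]
  have : ((d ! : ℕ) : ℂ) ≠ 0 := cast_ne_zero.2 (factorial_ne_zero d)
  field_simp
  push_cast
  ring

theorem mul_gbinomC_sub_one (x : ℂ) (m : ℕ) :
    x * gbinomC (x - 1) m = (x - m) * gbinomC x m := by
  simp only [gbinomC, mul_div_assoc']
  congr 1
  have h := prod_range_succ' (fun i : ℕ => x - i) m
  rw [prod_range_succ] at h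
  simp only [cast_add, cast_one, CharP.cast_eq_zero, sub_zero] at h
  rw [mul_comm (x - m), h, mul_comm x]
  congr 1
  exact prod_congr rfl fun i _ => by ring

theorem gbinomC_natCast_add_self (x : ℂ) (d : ℕ) :
    gbinomC (d + x) d = (∏ i ∈ range d, (x + 1 + i)) / d ! := by
  rw [gbinomC, ← prod_range_reflect]
  congr 1
  refine prod_congr rfl fun i hi => ?_
  rw [mem_range] at hi
  rw [Nat.cast_sub (by omega), Nat.cast_sub (by omega)]
  push_cast
  ring

theorem gbinomC_natCast_add_self_div_cpow {s : ℂ} (hs : s ≠ 0) (d : ℕ) :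
    gbinomC (d + s) d / (d : ℂ) ^ s = (s * Complex.GammaSeq s d)⁻¹ := by
  rw [gbinomC_natCast_add_self, Complex.GammaSeq, prod_range_succ']
  simp only [div_eq_mul_inv, mul_inv, inv_inv, cast_zero, add_zero, cast_add, cast_one]
  rw [prod_congr rfl fun (i : ℕ) _ => show s + (i + 1) = s + 1 + i by ring]
  field_simp

theorem tendsto_gbinomC_natCast_add_self_div_cpow {s : ℂ} (hs : ∀ m : ℕ, s ≠ -m) :
    Tendsto (fun d : ℕ => gbinomC (d + s) d / (d : ℂ) ^ s) atTop
      (𝓝 (Complex.Gamma (s + 1))⁻¹) := by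
  have hs0 : s ≠ 0 := by simpa using hs 0
  simp_rw [gbinomC_natCast_add_self_div_cpow hs0, Complex.Gamma_add_one s hs0]
  exact ((Complex.GammaSeq_tendsto_Gamma s).const_mul s).inv₀
    (mul_ne_zero hs0 (Complex.Gamma_ne_zero hs))

theorem lagC_natCast (γ : ℂ) (N : ℕ) (x : ℂ) :
    lagC γ N x = ∑ k ∈ range (N + 1), (-1) ^ k * gbinomC (N + γ) (N - k) * x ^ k / k ! := by
  simp [lagC]

theorem lagC_natCast_zero (γ : ℂ) (N : ℕ) : lagC γ N 0 = gbinomC (N + γ) N := by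
  rw [lagC_natCast, sum_eq_single 0 (fun k _ hk => by simp [hk]) (by simp)]
  simp

@[fun_prop]
theorem continuous_lagC (γ : ℂ) (N : ℤ) : Continuous (lagC γ N) := by
  unfold lagC
  split_ifs <;> fun_prop

-- The `if` matters: `N - k` truncates and `gbinomC x 0 = 1`.
noncomputable def scaledLaguerreCoeff (β : ℂ) (N n k : ℕ) : ℂ :=
  if k ≤ N then (n : ℂ) ^ (-β) * ((-1) ^ k * gbinomC (N + β) (N - k) / (n ^ k * k !)) else 0

theorem cpow_neg_mul_lagC_div_eq_tsum (β : ℂ) (N n : ℕ) (z : ℂ) :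
    (n : ℂ) ^ (-β) * lagC β N (z / n) = ∑' k, scaledLaguerreCoeff β N n k * z ^ k := by
  rw [tsum_eq_sum (s := range (N + 1)) fun k hk => by
    simp [scaledLaguerreCoeff, show ¬k ≤ N by simpa using hk], lagC_natCast, mul_sum]
  refine sum_congr rfl fun k hk => ?_
  rw [scaledLaguerreCoeff, if_pos (by simpa [Nat.lt_succ_iff] using hk), div_pow]
  ring

theorem scaledLaguerreCoeff_succ_mul (β : ℂ) {N n k : ℕ} (hkN : k + 1 ≤ N) (hn : n ≠ 0) :
    scaledLaguerreCoeff β N n (k + 1) * ((k + 1 : ℕ) * n * (β + k + 1))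
      = -(N - k : ℕ) * scaledLaguerreCoeff β N n k := by
  have h := gbinomC_succ_mul (N + β) (N - (k + 1))
  rw [show N - (k + 1) + 1 = N - k by omega, cast_sub hkN] at h
  have h' : gbinomC (N + β) (N - (k + 1)) * (β + k + 1) = gbinomC (N + β) (N - k) * (N - k) := by
    push_cast at h
    linear_combination -h
  simp only [scaledLaguerreCoeff, if_pos hkN, if_pos (le_of_succ_le hkN), factorial_succ]
  rw [cast_sub (le_of_succ_le hkN), cast_succ]
  have hn' : (n : ℂ) ≠ 0 := cast_ne_zero.2 hn
  have hk : (k + 1 : ℂ) ≠ 0 := by exact_mod_cast succ_ne_zero k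
  have hkf : (k ! : ℂ) ≠ 0 := cast_ne_zero.2 (factorial_ne_zero k)
  field_simp
  push_cast
  linear_combination (-(n : ℂ) ^ (-β) * (-1) ^ k * (k + 1) * n ^ (k + 1) * k !) * h'

theorem norm_scaledLaguerreCoeff_succ_le {β : ℂ} (hβ : 0 ≤ β.re) {N n : ℕ} (hNn : N ≤ n)
    (k : ℕ) :
    ‖scaledLaguerreCoeff β N n (k + 1)‖ ≤ ‖scaledLaguerreCoeff β N n k‖ / (k + 1) := by
  by_cases hkN : k + 1 ≤ N
  swap
  · simp only [scaledLaguerreCoeff, if_neg hkN, norm_zero]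
    positivity
  have hβk : 1 ≤ ‖β + k + 1‖ := by
    refine le_trans ?_ (Complex.re_le_norm _)
    simp only [Complex.add_re, Complex.natCast_re, Complex.one_re]
    linarith [(k.cast_nonneg : (0 : ℝ) ≤ k)]
  have hnorm := congrArg norm (scaledLaguerreCoeff_succ_mul β (n := n) hkN (by omega))
  simp only [norm_mul, norm_neg, Complex.norm_natCast] at hnorm
  push_cast at hnorm
  have hn : (0 : ℝ) < n := by exact_mod_cast (by omega : 0 < n)
  have hNk : ((N - k : ℕ) : ℝ) ≤ n := by exact_mod_cast (by omega : N - k ≤ n)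
  rw [le_div_iff₀ (by positivity), ← mul_le_mul_iff_left₀ hn]
  calc ‖scaledLaguerreCoeff β N n (k + 1)‖ * (k + 1) * n
      ≤ ‖scaledLaguerreCoeff β N n (k + 1)‖ * ((k + 1) * n * ‖β + k + 1‖) := by
        rw [← mul_assoc, mul_assoc _ (_ + 1 : ℝ)]
        exact le_mul_of_one_le_right (by positivity) hβk
    _ ≤ ‖scaledLaguerreCoeff β N n k‖ * n := by
        rw [hnorm, mul_comm]
        exact mul_le_mul_of_nonneg_left hNk (norm_nonneg _)

theorem norm_scaledLaguerreCoeff_le {β : ℂ} (hβ : 0 ≤ β.re) {N n : ℕ} (hNn : N ≤ n) (k : ℕ) :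
    ‖scaledLaguerreCoeff β N n k‖ ≤ ‖scaledLaguerreCoeff β N n 0‖ / k ! := by
  induction k with
  | zero => simp
  | succ k ih =>
    calc ‖scaledLaguerreCoeff β N n (k + 1)‖ ≤ ‖scaledLaguerreCoeff β N n k‖ / (k + 1) :=
          norm_scaledLaguerreCoeff_succ_le hβ hNn k
      _ ≤ ‖scaledLaguerreCoeff β N n 0‖ / k ! / (k + 1) := by gcongr
      _ = ‖scaledLaguerreCoeff β N n 0‖ / (k + 1)! := by
          rw [factorial_succ, cast_mul, div_div, mul_comm]; push_cast; ring

theorem scaledLaguerreCoeff_eq_mul {β : ℂ} {N n k : ℕ} (hk : k < N) (hn : n ≠ 0) :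
    scaledLaguerreCoeff β N n k = (-1) ^ k / k ! *
      (gbinomC ((N - k : ℕ) + (β + k)) (N - k) / ((N - k : ℕ) : ℂ) ^ (β + k)) *
      (((N - k : ℕ) / n : ℝ) : ℂ) ^ (β + k) := by
  have hn' : (n : ℂ) ≠ 0 := cast_ne_zero.2 hn
  rw [scaledLaguerreCoeff, if_pos hk.le, Complex.ofReal_div,
    Complex.div_cpow_ofReal_nonneg (cast_nonneg _) (cast_nonneg _), Complex.ofReal_natCast,
    Complex.ofReal_natCast, Complex.cpow_add _ _ hn', Complex.cpow_natCast, Complex.cpow_neg,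
    cast_sub hk.le, show (N : ℂ) - k + (β + k) = N + β by ring]
  have hd : ((N : ℂ) - k) ^ (β + k) ≠ 0 :=
    Complex.cpow_ne_zero_iff.2 (Or.inl (sub_ne_zero.2 (by exact_mod_cast hk.ne')))
  have hkf : (k ! : ℂ) ≠ 0 := cast_ne_zero.2 (factorial_ne_zero k)
  field_simp

theorem tendsto_natCast_sub_div {N n : ℕ → ℕ} (hN : Tendsto N atTop atTop)
    (hratio : Tendsto (fun j => (N j : ℝ) / n j) atTop (𝓝 1)) (k : ℕ) :
    Tendsto (fun j => ((N j - k : ℕ) / n j : ℝ)) atTop (𝓝 1) := by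
  have hd : Tendsto (fun j => ((N j - k : ℕ) : ℝ) / ((N j - k : ℕ) + k)) atTop (𝓝 1) :=
    (tendsto_natCast_div_add_atTop (k : ℝ)).comp ((tendsto_sub_atTop_nat k).comp hN)
  have hprod := hd.mul hratio
  rw [one_mul] at hprod
  refine hprod.congr' ?_
  filter_upwards [hN.eventually_ge_atTop (k + 1)] with j hj
  rw [← cast_add, Nat.sub_add_cancel (by omega)]
  have : (N j : ℝ) ≠ 0 := by exact_mod_cast (by omega : N j ≠ 0)
  field_simp

noncomputable def besselCoeff (β : ℂ) (k : ℕ) : ℂ :=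
  (-1) ^ k / (k ! * Complex.Gamma (β + k + 1))

theorem besselEntire_eq_tsum (β z : ℂ) :
    besselEntire β z = ∑' k, besselCoeff β k * z ^ k :=
  tsum_congr fun k => by rw [besselCoeff]; ring

theorem tendsto_scaledLaguerreCoeff {β : ℂ} (hβ : ∀ m : ℕ, β ≠ -m) {N n : ℕ → ℕ}
    (hN : Tendsto N atTop atTop) (hratio : Tendsto (fun j => (N j : ℝ) / n j) atTop (𝓝 1))
    (k : ℕ) :
    Tendsto (fun j => scaledLaguerreCoeff β (N j) (n j) k) atTop (𝓝 (besselCoeff β k)) := by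
  have hs : ∀ m : ℕ, β + k ≠ -m := fun m h => hβ (m + k) (by push_cast; linear_combination h)
  have hgbinom := (tendsto_gbinomC_natCast_add_self_div_cpow hs).comp
    ((tendsto_sub_atTop_nat k).comp hN)
  have hpow : Tendsto (fun j => (((N j - k : ℕ) / n j : ℝ) : ℂ) ^ (β + k)) atTop (𝓝 1) := by
    have hcont : Tendsto (fun x : ℝ => (x : ℂ) ^ (β + k)) (𝓝 1) (𝓝 1) := by
      simpa using (Complex.continuousAt_ofReal_cpow_const 1 (β + k) (Or.inr one_ne_zero)).tendsto
    exact hcont.comp (tendsto_natCast_sub_div hN hratio k)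
  have hlim := (tendsto_const_nhds (x := (-1 : ℂ) ^ k / k !)).mul hgbinom |>.mul hpow
  rw [mul_one, show (-1 : ℂ) ^ k / k ! * (Complex.Gamma (β + k + 1))⁻¹ = besselCoeff β k by
    rw [besselCoeff]; ring] at hlim
  refine hlim.congr' ?_
  filter_upwards [hN.eventually_gt_atTop k, hratio.eventually (lt_mem_nhds one_pos)]
    with j hk hn
  have hn : n j ≠ 0 := by rintro h; simp [h] at hn
  exact (scaledLaguerreCoeff_eq_mul hk hn).symm

theorem tendstoUniformlyOn_cpow_neg_mul_lagC {β : ℂ} (hβ : 0 < β.re) {N n : ℕ → ℕ}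
    (hN : Tendsto N atTop atTop) (hNn : ∀ j, N j ≤ n j)
    (hratio : Tendsto (fun j => (N j : ℝ) / n j) atTop (𝓝 1)) {R : ℝ} (hR : 0 ≤ R) :
    TendstoUniformlyOn (fun j z => (n j : ℂ) ^ (-β) * lagC β (N j) (z / n j))
      (besselEntire β) atTop (closedBall 0 R) := by
  have hβ' : ∀ m : ℕ, β ≠ -m := fun m h => by
    have := congrArg Complex.re h
    simp only [Complex.neg_re, Complex.natCast_re] at this
    linarith [m.cast_nonneg (α := ℝ)]
  have hc := tendsto_scaledLaguerreCoeff hβ' hN hratio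
  obtain ⟨M, hM⟩ := (hc 0).norm.isBoundedUnder_le
  have hD : Summable fun k => M / k ! * R ^ k :=
    ((Real.summable_pow_div_factorial R).mul_left M).congr fun k => by ring
  have hbound : ∀ᶠ j in atTop, ∀ k, ‖scaledLaguerreCoeff β (N j) (n j) k‖ ≤ M / k ! :=
    (eventually_map.1 hM).mono fun j hj k =>
      (norm_scaledLaguerreCoeff_le hβ.le (hNn j) k).trans (by gcongr)
  simp_rw [cpow_neg_mul_lagC_div_eq_tsum]
  rw [show besselEntire β = fun z => ∑' k, besselCoeff β k * z ^ k from
    funext (besselEntire_eq_tsum β)]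
  exact tendstoUniformlyOn_tsum_mul_pow_of_dominated hR hD hc hbound

theorem norm_Gamma_add_one_mul_factorial_le {β : ℂ} (hβ : 0 ≤ β.re) (k : ℕ) :
    ‖Complex.Gamma (β + 1)‖ * k ! ≤ ‖Complex.Gamma (β + k + 1)‖ := by
  induction k with
  | zero => simp
  | succ k ih =>
    have hre : (k + 1 : ℝ) ≤ (β + k + 1).re := by
      simp only [Complex.add_re, Complex.natCast_re, Complex.one_re]; linarith
    have hne : β + k + 1 ≠ 0 := fun h => by
      simp only [h, Complex.zero_re] at hre; linarith [(k.cast_nonneg : (0 : ℝ) ≤ k)]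
    rw [show β + (k + 1 : ℕ) + 1 = (β + k + 1) + 1 by push_cast; ring,
      Complex.Gamma_add_one _ hne, norm_mul, factorial_succ, cast_mul, cast_succ]
    calc ‖Complex.Gamma (β + 1)‖ * ((k + 1) * k !)
        = (k + 1) * (‖Complex.Gamma (β + 1)‖ * k !) := by ring
      _ ≤ ‖β + k + 1‖ * ‖Complex.Gamma (β + k + 1)‖ := by
        gcongr
        exact hre.trans (Complex.re_le_norm _)

theorem summable_besselCoeff_mul_pow {β : ℂ} (hβ : 0 ≤ β.re) (z : ℂ) :
    Summable fun k => besselCoeff β k * z ^ k := by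
  have hΓ : 0 < ‖Complex.Gamma (β + 1)‖ :=
    norm_pos_iff.2 (Complex.Gamma_ne_zero_of_re_pos (by
      simp only [Complex.add_re, Complex.one_re]; linarith))
  refine ((Real.summable_pow_div_factorial ‖z‖).mul_left ‖Complex.Gamma (β + 1)‖⁻¹).of_norm_bounded
    fun k => ?_
  have hk : (1 : ℝ) ≤ k ! := by exact_mod_cast factorial_pos k
  have hΓk := norm_Gamma_add_one_mul_factorial_le hβ k
  rw [besselCoeff, norm_mul, norm_div, norm_mul, norm_pow, norm_pow, norm_neg, norm_one, one_pow,
    Complex.norm_natCast, div_mul_eq_mul_div, one_mul, ← mul_div_assoc, inv_mul_eq_div, div_div,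
    mul_comm (k ! : ℝ)]
  gcongr
  exact le_mul_of_one_le_right (by positivity) hk |>.trans hΓk

theorem besselCoeff_zero_eq {β : ℂ} (hβ : β + 1 ≠ 0) :
    besselCoeff β 0 = (β + 1) * besselCoeff (β + 1) 0 := by
  simp only [besselCoeff, pow_zero, factorial_zero, cast_one, cast_zero, add_zero, one_mul]
  rw [Complex.Gamma_add_one _ hβ]
  field_simp

theorem besselCoeff_succ_eq {β : ℂ} (hβ : -1 < β.re) (k : ℕ) :
    besselCoeff β (k + 1) = (β + 1) * besselCoeff (β + 1) (k + 1) - besselCoeff (β + 2) k := by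
  have hre : (k : ℝ) + 1 < (β + k + 2).re := by
    simp only [Complex.add_re, Complex.natCast_re, Complex.re_ofNat]; linarith
  have hne : β + k + 2 ≠ 0 := fun h => by
    rw [h, Complex.zero_re] at hre; linarith [(k.cast_nonneg : (0 : ℝ) ≤ k)]
  have hΓ : Complex.Gamma (β + k + 2) ≠ 0 :=
    Complex.Gamma_ne_zero_of_re_pos (by linarith [(k.cast_nonneg : (0 : ℝ) ≤ k)])
  have h3 : Complex.Gamma (β + k + 3) = (β + k + 2) * Complex.Gamma (β + k + 2) := by
    rw [← Complex.Gamma_add_one _ hne]; ring_nf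
  simp only [besselCoeff, factorial_succ, cast_mul, cast_succ]
  rw [show β + (k + 1) + 1 = β + k + 2 by ring, show β + 1 + (k + 1) + 1 = β + k + 3 by ring,
    show β + 2 + k + 1 = β + k + 3 by ring, h3]
  have hk : (k ! : ℂ) ≠ 0 := cast_ne_zero.2 (factorial_ne_zero k)
  have hk1 : (k : ℂ) + 1 ≠ 0 := by exact_mod_cast succ_ne_zero k
  field_simp
  ring

theorem mul_besselEntire_add_two {β : ℂ} (hβ : -1 < β.re) (z : ℂ) :
    z * besselEntire (β + 2) z = (β + 1) * besselEntire (β + 1) z - besselEntire β z := by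
  have hβ1 : β + 1 ≠ 0 := fun h => by
    have := congrArg Complex.re h
    simp only [Complex.add_re, Complex.one_re, Complex.zero_re] at this
    linarith
  -- `summable_besselCoeff_mul_pow` misses `-1 < β.re < 0`, so the series for `β` is summed
  -- from those for `β + 1` and `β + 2`.
  have h1 := (summable_besselCoeff_mul_pow (β := β + 1)
    (by simp only [Complex.add_re, Complex.one_re]; linarith) z).hasSum
  have h2 := (summable_besselCoeff_mul_pow (β := β + 2)
    (by simp only [Complex.add_re, Complex.re_ofNat]; linarith) z).hasSum
  rw [← besselEntire_eq_tsum] at h1 h2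
  have h0 : HasSum (fun k => besselCoeff β k * z ^ k)
      ((β + 1) * besselEntire (β + 1) z - z * besselEntire (β + 2) z) := by
    rw [← hasSum_nat_add_iff' 1]
    convert (((hasSum_nat_add_iff' 1).2 h1).mul_left (β + 1)).sub (h2.mul_left z) using 1
    · funext k
      rw [besselCoeff_succ_eq hβ k]
      ring
    · simp only [range_one, sum_singleton, besselCoeff_zero_eq hβ1, pow_zero, mul_one]
      ring
  rw [besselEntire_eq_tsum β, h0.tsum_eq]
  ring

theorem tendstoUniformlyOn_mul_lagC_div_mul {u : ℂ → ℂ} (hu : Continuous u) (γ : ℂ) (p : ℤ)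
    {n : ℕ → ℕ} (hn : Tendsto n atTop atTop) {H : ℕ → ℂ → ℂ} {h : ℂ → ℂ} {R : ℝ}
    (hH : TendstoUniformlyOn H h atTop (closedBall 0 R)) (hHc : ∀ j, Continuous (H j)) :
    TendstoUniformlyOn (fun j z => u z * lagC γ p (z / n j) * H j z)
      (fun z => u z * lagC γ p 0 * h z) atTop (closedBall 0 R) := by
  have hK := isCompact_closedBall (0 : ℂ) R
  obtain ⟨Cu, hCu⟩ := hK.exists_bound_of_continuousOn hu.continuousOn
  obtain ⟨Ch, hCh⟩ := hK.exists_bound_of_continuousOn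
    (hH.continuousOn (Frequently.of_forall fun j => (hHc j).continuousOn))
  have hu' : TendstoUniformlyOn (fun (_ : ℕ) z => u z) u atTop (closedBall 0 R) :=
    tendstoUniformlyOn_iff_tendsto_sub.2 (by simpa using tendsto_const_nhds)
  have hlag := tendstoUniformlyOn_comp_div_natCast (continuous_lagC γ p).continuousAt hn R
  refine (hu'.mul_of_bound hlag hCu fun _ _ => le_rfl).mul_of_bound hH
    (Cf := Cu * ‖lagC γ p 0‖) (fun z hz => ?_) hCh
  rw [norm_mul]
  exact mul_le_mul_of_nonneg_right (hCu z hz) (norm_nonneg _)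

theorem cpow_mul_XLagIIC_div (α : ℂ) (m : ℕ) {n j : ℕ} (hn : n ≠ 0) (hj : j ≠ 0) (z : ℂ) :
    (n : ℂ) ^ (-α - 1) * XLagIIC α m j (z / n) =
      z * lagC (-α - 1) m (z / n) * ((n : ℂ) ^ (-(α + 2)) * lagC (α + 2) (j - 1 : ℕ) (z / n)) +
      (m - α - 1) * lagC (-α - 2) m (z / n) * ((n : ℂ) ^ (-(α + 1)) * lagC (α + 1) j (z / n)) := by
  have hn' : (n : ℂ) ≠ 0 := cast_ne_zero.2 hn
  rw [XLagIIC, show (j : ℤ) - 1 = (j - 1 : ℕ) by omega, show -(α + 1) = -α - 1 by ring,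
    show -(α + 2) = (-α - 1) + (-1) by ring, Complex.cpow_add _ _ hn', Complex.cpow_neg_one,
    Int.cast_natCast]
  field_simp

theorem xLaguerreII_limit_eq {α : ℂ} (hα : -1 < α.re) (m : ℕ) (z : ℂ) :
    z * lagC (-α - 1) m 0 * besselEntire (α + 2) z
      + (m - α - 1) * lagC (-α - 2) m 0 * besselEntire (α + 1) z
      = -gbinomC (m - 1 - α) m * besselEntire α z := by
  rw [lagC_natCast_zero, lagC_natCast_zero, show (m : ℂ) + (-α - 1) = m - 1 - α by ring,
    show (m : ℂ) + (-α - 2) = m - 1 - α - 1 by ring]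
  linear_combination gbinomC (m - 1 - α) m * mul_besselEntire_add_two hα z
    + besselEntire (α + 1) z * mul_gbinomC_sub_one (m - 1 - α) m

/-- Heine–Mehler type formula for the type II exceptional Laguerre polynomials:
with `n = m + j`, `n^{-α-1} \hat L^{II,α}_{m,n}(z/n)` converges uniformly on compact
subsets of `ℂ` to `-\binom{m-1-α}{m} z^{-α/2} J_α(2√z)`. -/
theorem xLaguerreII_heine_mehler (m : ℕ) (α : ℝ) (hα : -1 < α) :
    ∀ K : Set ℂ, IsCompact K →
      TendstoUniformlyOn
        (fun (j : ℕ) (z : ℂ) =>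
          ((m + j : ℕ) : ℂ) ^ (-(α : ℂ) - 1) * XLagIIC α m j (z / (m + j : ℕ)))
        (fun z => -(gbinomC ((m : ℂ) - 1 - α) m) * besselEntire α z) Filter.atTop K := by
  intro K hK
  obtain ⟨R, hR, hKR⟩ := hK.isBounded.subset_closedBall_lt 0 0
  refine TendstoUniformlyOn.mono ?_ hKR
  have hn : Tendsto (fun j : ℕ => m + j) atTop atTop :=
    tendsto_atTop_mono (fun j => le_add_self) tendsto_id
  have hratio : Tendsto (fun j : ℕ => (j : ℝ) / (m + j : ℕ)) atTop (𝓝 1) :=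
    (tendsto_natCast_div_add_atTop (m : ℝ)).congr fun j => by push_cast; ring
  have H1 := tendstoUniformlyOn_cpow_neg_mul_lagC (β := α + 2)
    (by simp only [Complex.add_re, Complex.ofReal_re, Complex.re_ofNat]; linarith)
    (tendsto_sub_atTop_nat 1) (fun j => by omega) (tendsto_natCast_sub_div tendsto_id hratio 1)
    hR.le
  have H2 := tendstoUniformlyOn_cpow_neg_mul_lagC (β := α + 1)
    (by simp only [Complex.add_re, Complex.ofReal_re, Complex.one_re]; linarith)
    tendsto_id (fun j => le_add_self) hratio hR.le
  have T1 := tendstoUniformlyOn_mul_lagC_div_mul continuous_id (-α - 1) m hn H1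
    fun j => by fun_prop
  have T2 := tendstoUniformlyOn_mul_lagC_div_mul (u := fun _ => (m : ℂ) - α - 1)
    continuous_const (-α - 2) m hn H2 fun j => by fun_prop
  refine ((T1.add T2).congr ?_).congr_right fun z _ => xLaguerreII_limit_eq (by simpa) m z
  filter_upwards [eventually_ne_atTop 0] with j hj z _
  exact (cpow_mul_XLagIIC_div α m (by omega) hj z).symm
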